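/- With h, M, N as in the context, assume a = b, b ≠ 0, c ≠ 0, and set χ = c·B + b·(A − C − 2k³). Then there exist ε > 0 and a smooth function w : (−ε, ε) → ℝ with w(0) = 0 such that M(u, w(u)) = 0 for all |u| < ε, and along this curve N has a quadratic zero at the origin: N(u, w(u)) = (χ/(2c))·u² + o(u²) as u → 0. In particular, if χ ≠ 0 the curves M = 0 and N = 0 have exactly quadratic contact at the origin. -/

import Mathlib

open Asymptotics Filter Topology

noncomputable section

/-- The Monge chart `h` at an umbilic point (coefficient of `u²v` normalized to 0). -/
def hFun (k a b c A B C D E u v : ℝ) : ℝ :=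
  k / 2 * (u ^ 2 + v ^ 2) + a / 6 * u ^ 3 + b / 2 * u * v ^ 2 + c / 6 * v ^ 3
    + A / 24 * u ^ 4 + B / 6 * u ^ 3 * v + C / 4 * u ^ 2 * v ^ 2
    + D / 6 * u * v ^ 3 + E / 24 * v ^ 4

/-- Partial derivative `h_u`. -/
def h_u (k a b c A B C D E u v : ℝ) : ℝ := deriv (fun x => hFun k a b c A B C D E x v) u

/-- Partial derivative `h_v`. -/
def h_v (k a b c A B C D E u v : ℝ) : ℝ := deriv (fun y => hFun k a b c A B C D E u y) v

/-- Partial derivative `h_uu`. -/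
def h_uu (k a b c A B C D E u v : ℝ) : ℝ := deriv (fun x => h_u k a b c A B C D E x v) u

/-- Partial derivative `h_uv`. -/
def h_uv (k a b c A B C D E u v : ℝ) : ℝ := deriv (fun y => h_u k a b c A B C D E u y) v

/-- Partial derivative `h_vv`. -/
def h_vv (k a b c A B C D E u v : ℝ) : ℝ := deriv (fun y => h_v k a b c A B C D E u y) v

/-- Coefficient `L = h_u h_v h_vv − (1+h_v²) h_uv` of the principal-line equation. -/
def eqL (k a b c A B C D E u v : ℝ) : ℝ :=
  h_u k a b c A B C D E u v * h_v k a b c A B C D E u v * h_vv k a b c A B C D E u v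
    - (1 + h_v k a b c A B C D E u v ^ 2) * h_uv k a b c A B C D E u v

/-- Coefficient `M = (1+h_u²) h_vv − (1+h_v²) h_uu` of the principal-line equation. -/
def eqM (k a b c A B C D E u v : ℝ) : ℝ :=
  (1 + h_u k a b c A B C D E u v ^ 2) * h_vv k a b c A B C D E u v
    - (1 + h_v k a b c A B C D E u v ^ 2) * h_uu k a b c A B C D E u v

/-- Coefficient `N = (1+h_u²) h_uv − h_u h_v h_uu` of the principal-line equation. -/
def eqN (k a b c A B C D E u v : ℝ) : ℝ :=
  (1 + h_u k a b c A B C D E u v ^ 2) * h_uv k a b c A B C D E u v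
    - h_u k a b c A B C D E u v * h_v k a b c A B C D E u v * h_uu k a b c A B C D E u v

/-- `T(u,v,p) = L p² + M p + N`, the lifted principal-line equation. -/
def eqT (k a b c A B C D E u v p : ℝ) : ℝ :=
  eqL k a b c A B C D E u v * p ^ 2 + eqM k a b c A B C D E u v * p + eqN k a b c A B C D E u v

/-- Partial derivative `T_u`. -/
def eqT_u (k a b c A B C D E u v p : ℝ) : ℝ := deriv (fun x => eqT k a b c A B C D E x v p) u

/-- Partial derivative `T_v`. -/
def eqT_v (k a b c A B C D E u v p : ℝ) : ℝ := deriv (fun y => eqT k a b c A B C D E u y p) v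

/-- Partial derivative `T_p`. -/
def eqT_p (k a b c A B C D E u v p : ℝ) : ℝ := deriv (fun q => eqT k a b c A B C D E u v q) p

/-- The Lie–Cartan vector field `X(u,v,p) = (T_p, p T_p, −(T_u + p T_v))` on `ℝ³ = ℝ×ℝ×ℝ`. -/
def lieCartan (k a b c A B C D E : ℝ) (w : ℝ × ℝ × ℝ) : ℝ × ℝ × ℝ :=
  (eqT_p k a b c A B C D E w.1 w.2.1 w.2.2,
   w.2.2 * eqT_p k a b c A B C D E w.1 w.2.1 w.2.2,
   -(eqT_u k a b c A B C D E w.1 w.2.1 w.2.2 + w.2.2 * eqT_v k a b c A B C D E w.1 w.2.1 w.2.2))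

/-- The Lie–Cartan vector field, as a map `(Fin 3 → ℝ) → (Fin 3 → ℝ)`. -/
def lieCartan3 (k a b c A B C D E : ℝ) (w : Fin 3 → ℝ) : Fin 3 → ℝ :=
  ![eqT_p k a b c A B C D E (w 0) (w 1) (w 2),
    w 2 * eqT_p k a b c A B C D E (w 0) (w 1) (w 2),
    -(eqT_u k a b c A B C D E (w 0) (w 1) (w 2)
        + w 2 * eqT_v k a b c A B C D E (w 0) (w 1) (w 2))]

def Hu (k a b c A B C D E u v : ℝ) : ℝ :=
  k*u + a/2*u^2 + b/2*v^2 + A/6*u^3 + B/2*u^2*v + C/2*u*v^2 + D/6*v^3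
def Hv (k a b c A B C D E u v : ℝ) : ℝ :=
  k*v + b*u*v + c/2*v^2 + B/6*u^3 + C/2*u^2*v + D/2*u*v^2 + E/6*v^3
def Huu (k a b c A B C D E u v : ℝ) : ℝ := k + a*u + A/2*u^2 + B*u*v + C/2*v^2
def Huv (k a b c A B C D E u v : ℝ) : ℝ := b*v + B/2*u^2 + C*u*v + D/2*v^2
def Hvv (k a b c A B C D E u v : ℝ) : ℝ := k + b*u + c*v + C/2*u^2 + D*u*v + E/2*v^2
def MM (k a b c A B C D E u v : ℝ) : ℝ :=
  (1 + Hu k a b c A B C D E u v ^ 2) * Hvv k a b c A B C D E u v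
    - (1 + Hv k a b c A B C D E u v ^ 2) * Huu k a b c A B C D E u v
def NN (k a b c A B C D E u v : ℝ) : ℝ :=
  (1 + Hu k a b c A B C D E u v ^ 2) * Huv k a b c A B C D E u v
    - Hu k a b c A B C D E u v * Hv k a b c A B C D E u v * Huu k a b c A B C D E u v
def MMv (k a b c A B C D E u v : ℝ) : ℝ :=
  (2 * Hu k a b c A B C D E u v * Huv k a b c A B C D E u v) * Hvv k a b c A B C D E u v
    + (1 + Hu k a b c A B C D E u v ^ 2) * (c + D*u + E*v)
    - ((2 * Hv k a b c A B C D E u v * Hvv k a b c A B C D E u v) * Huu k a b c A B C D E u v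
      + (1 + Hv k a b c A B C D E u v ^ 2) * (B*u + C*v))
def NNv (k a b c A B C D E u v : ℝ) : ℝ :=
  (2 * Hu k a b c A B C D E u v * Huv k a b c A B C D E u v) * Huv k a b c A B C D E u v
    + (1 + Hu k a b c A B C D E u v ^ 2) * (b + C*u + D*v)
    - (Huv k a b c A B C D E u v * Hv k a b c A B C D E u v * Huu k a b c A B C D E u v
      + Hu k a b c A B C D E u v * Hvv k a b c A B C D E u v * Huu k a b c A B C D E u v
      + Hu k a b c A B C D E u v * Hv k a b c A B C D E u v * (B*u + C*v))

lemma hasDerivAt_poly4 (c0 c1 c2 c3 c4 x : ℝ) :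
    HasDerivAt (fun t : ℝ => c0 + c1*t + c2*t^2 + c3*t^3 + c4*t^4)
      (c1 + 2*c2*x + 3*c3*x^2 + 4*c4*x^3) x := by
  have h : HasDerivAt (fun t : ℝ => c0 + (c1*t + (c2*t^2 + (c3*t^3 + c4*t^4))))
      (c1*1 + (c2*((2:ℕ)*x^1) + (c3*((3:ℕ)*x^2) + c4*((4:ℕ)*x^3)))) x :=
    (((hasDerivAt_id x).const_mul c1).add (((hasDerivAt_pow 2 x).const_mul c2).add
      (((hasDerivAt_pow 3 x).const_mul c3).add ((hasDerivAt_pow 4 x).const_mul c4)))).const_add c0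
  have hf : (fun t : ℝ => c0 + c1*t + c2*t^2 + c3*t^3 + c4*t^4)
      = fun t : ℝ => c0 + (c1*t + (c2*t^2 + (c3*t^3 + c4*t^4))) := by funext t; ring
  rw [hf]; convert h using 1; push_cast; ring

lemma h_u_eq (k a b c A B C D E u v : ℝ) :
    h_u k a b c A B C D E u v = Hu k a b c A B C D E u v := by
  have hf : (fun x => hFun k a b c A B C D E x v) = fun x =>
      (k/2*v^2 + c/6*v^3 + E/24*v^4) + (b/2*v^2 + D/6*v^3)*x + (k/2 + C/4*v^2)*x^2
      + (a/6 + B/6*v)*x^3 + (A/24)*x^4 := by funext x; unfold hFun; ring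
  unfold h_u
  rw [hf, (hasDerivAt_poly4 _ _ _ _ _ _).deriv]
  unfold Hu; ring


lemma h_v_eq (k a b c A B C D E u v : ℝ) :
    h_v k a b c A B C D E u v = Hv k a b c A B C D E u v := by
  have hf : (fun y => hFun k a b c A B C D E u y) = fun y =>
      (k/2*u^2 + a/6*u^3 + A/24*u^4) + (B/6*u^3)*y + (k/2 + b/2*u + C/4*u^2)*y^2
      + (c/6 + D/6*u)*y^3 + (E/24)*y^4 := by funext y; unfold hFun; ring
  unfold h_v
  rw [hf, (hasDerivAt_poly4 _ _ _ _ _ _).deriv]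
  unfold Hv; ring

lemma h_uu_eq (k a b c A B C D E u v : ℝ) :
    h_uu k a b c A B C D E u v = Huu k a b c A B C D E u v := by
  have hf : (fun x => h_u k a b c A B C D E x v) = fun x =>
      (b/2*v^2 + D/6*v^3) + (k + C/2*v^2)*x + (a/2 + B/2*v)*x^2 + (A/6)*x^3 + 0*x^4 := by
    funext x; rw [h_u_eq]; unfold Hu; ring
  unfold h_uu
  rw [hf, (hasDerivAt_poly4 _ _ _ _ _ _).deriv]
  unfold Huu; ring

lemma h_uv_eq (k a b c A B C D E u v : ℝ) :
    h_uv k a b c A B C D E u v = Huv k a b c A B C D E u v := by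
  have hf : (fun y => h_u k a b c A B C D E u y) = fun y =>
      (k*u + a/2*u^2 + A/6*u^3) + (B/2*u^2)*y + (b/2 + C/2*u)*y^2 + (D/6)*y^3 + 0*y^4 := by
    funext y; rw [h_u_eq]; unfold Hu; ring
  unfold h_uv
  rw [hf, (hasDerivAt_poly4 _ _ _ _ _ _).deriv]
  unfold Huv; ring

lemma h_vv_eq (k a b c A B C D E u v : ℝ) :
    h_vv k a b c A B C D E u v = Hvv k a b c A B C D E u v := by
  have hf : (fun y => h_v k a b c A B C D E u y) = fun y =>
      (B/6*u^3) + (k + b*u + C/2*u^2)*y + (c/2 + D/2*u)*y^2 + (E/6)*y^3 + 0*y^4 := by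
    funext y; rw [h_v_eq]; unfold Hv; ring
  unfold h_vv
  rw [hf, (hasDerivAt_poly4 _ _ _ _ _ _).deriv]
  unfold Hvv; ring

lemma eqM_eq (k a b c A B C D E u v : ℝ) :
    eqM k a b c A B C D E u v = MM k a b c A B C D E u v := by
  unfold eqM MM; rw [h_u_eq, h_v_eq, h_uu_eq, h_vv_eq]

lemma eqN_eq (k a b c A B C D E u v : ℝ) :
    eqN k a b c A B C D E u v = NN k a b c A B C D E u v := by
  unfold eqN NN; rw [h_u_eq, h_v_eq, h_uu_eq, h_uv_eq]

-- derivatives in `v` of the five jet functions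
lemma hasDerivAt_Hu_v (k a b c A B C D E u v : ℝ) :
    HasDerivAt (fun y => Hu k a b c A B C D E u y) (Huv k a b c A B C D E u v) v := by
  have hf : (fun y => Hu k a b c A B C D E u y) = fun y =>
      (k*u + a/2*u^2 + A/6*u^3) + (B/2*u^2)*y + (b/2 + C/2*u)*y^2 + (D/6)*y^3 + 0*y^4 := by
    funext y; unfold Hu; ring
  rw [hf]
  convert hasDerivAt_poly4 _ _ _ _ _ v using 1
  unfold Huv; ring

lemma hasDerivAt_Hv_v (k a b c A B C D E u v : ℝ) :
    HasDerivAt (fun y => Hv k a b c A B C D E u y) (Hvv k a b c A B C D E u v) v := by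
  have hf : (fun y => Hv k a b c A B C D E u y) = fun y =>
      (B/6*u^3) + (k + b*u + C/2*u^2)*y + (c/2 + D/2*u)*y^2 + (E/6)*y^3 + 0*y^4 := by
    funext y; unfold Hv; ring
  rw [hf]
  convert hasDerivAt_poly4 _ _ _ _ _ v using 1
  unfold Hvv; ring

lemma hasDerivAt_Huu_v (k a b c A B C D E u v : ℝ) :
    HasDerivAt (fun y => Huu k a b c A B C D E u y) (B*u + C*v) v := by
  have hf : (fun y => Huu k a b c A B C D E u y) = fun y =>
      (k + a*u + A/2*u^2) + (B*u)*y + (C/2)*y^2 + 0*y^3 + 0*y^4 := by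
    funext y; unfold Huu; ring
  rw [hf]
  convert hasDerivAt_poly4 _ _ _ _ _ v using 1
  ring

lemma hasDerivAt_Huv_v (k a b c A B C D E u v : ℝ) :
    HasDerivAt (fun y => Huv k a b c A B C D E u y) (b + C*u + D*v) v := by
  have hf : (fun y => Huv k a b c A B C D E u y) = fun y =>
      (B/2*u^2) + (b + C*u)*y + (D/2)*y^2 + 0*y^3 + 0*y^4 := by
    funext y; unfold Huv; ring
  rw [hf]
  convert hasDerivAt_poly4 _ _ _ _ _ v using 1
  ring

lemma hasDerivAt_Hvv_v (k a b c A B C D E u v : ℝ) :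
    HasDerivAt (fun y => Hvv k a b c A B C D E u y) (c + D*u + E*v) v := by
  have hf : (fun y => Hvv k a b c A B C D E u y) = fun y =>
      (k + b*u + C/2*u^2) + (c + D*u)*y + (E/2)*y^2 + 0*y^3 + 0*y^4 := by
    funext y; unfold Hvv; ring
  rw [hf]
  convert hasDerivAt_poly4 _ _ _ _ _ v using 1
  ring

lemma hasDerivAt_MM_v (k a b c A B C D E u v : ℝ) :
    HasDerivAt (fun y => MM k a b c A B C D E u y) (MMv k a b c A B C D E u v) v := by
  have h1 := hasDerivAt_Hu_v k a b c A B C D E u v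
  have h2 := hasDerivAt_Hv_v k a b c A B C D E u v
  have h3 := hasDerivAt_Huu_v k a b c A B C D E u v
  have h5 := hasDerivAt_Hvv_v k a b c A B C D E u v
  have H := (((h1.pow 2).const_add 1).mul h5).sub (((h2.pow 2).const_add 1).mul h3)
  have hf : (fun y => MM k a b c A B C D E u y) = fun y =>
      (1 + Hu k a b c A B C D E u y ^ 2) * Hvv k a b c A B C D E u y
        - (1 + Hv k a b c A B C D E u y ^ 2) * Huu k a b c A B C D E u y := by
    funext y; unfold MM; ring
  rw [hf]
  refine H.congr_deriv ?_
  unfold MMv; push_cast; simp only [Pi.pow_apply]; ring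

lemma hasDerivAt_NN_v (k a b c A B C D E u v : ℝ) :
    HasDerivAt (fun y => NN k a b c A B C D E u y) (NNv k a b c A B C D E u v) v := by
  have h1 := hasDerivAt_Hu_v k a b c A B C D E u v
  have h2 := hasDerivAt_Hv_v k a b c A B C D E u v
  have h3 := hasDerivAt_Huu_v k a b c A B C D E u v
  have h4 := hasDerivAt_Huv_v k a b c A B C D E u v
  have H := (((h1.pow 2).const_add 1).mul h4).sub (((h1.mul h2).mul h3))
  have hf : (fun y => NN k a b c A B C D E u y) = fun y =>
      (1 + Hu k a b c A B C D E u y ^ 2) * Huv k a b c A B C D E u y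
        - Hu k a b c A B C D E u y * Hv k a b c A B C D E u y * Huu k a b c A B C D E u y := by
    funext y; unfold NN; ring
  rw [hf]
  refine H.congr_deriv ?_
  unfold NNv; push_cast; simp only [Pi.pow_apply, Pi.mul_apply]; ring

lemma MM_zero (k a b c A B C D E : ℝ) : MM k a b c A B C D E 0 0 = 0 := by
  unfold MM Hu Hv Huu Hvv; norm_num

lemma MMv_zero (k a b c A B C D E : ℝ) : MMv k a b c A B C D E 0 0 = c := by
  unfold MMv Hu Hv Huu Huv Hvv; norm_num

lemma contDiff_MM (k a b c A B C D E : ℝ) :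
    ContDiff ℝ (⊤ : ℕ∞) (fun p : ℝ × ℝ => MM k a b c A B C D E p.1 p.2) := by
  unfold MM Hu Hv Huu Hvv; fun_prop

lemma continuous_MMv (k a b c A B C D E : ℝ) :
    Continuous (fun p : ℝ × ℝ => MMv k a b c A B C D E p.1 p.2) := by
  unfold MMv Hu Hv Huu Huv Hvv; fun_prop

lemma continuous_NNv (k a b c A B C D E : ℝ) :
    Continuous (fun p : ℝ × ℝ => NNv k a b c A B C D E p.1 p.2) := by
  unfold NNv Hu Hv Huu Huv Hvv; fun_prop

set_option maxHeartbeats 2000000 in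
def Q1 (k b c A B C D E al u : ℝ) : ℝ :=
  (D*al + (-1)*B*al + 2*k^2*b) + ((1/2)*E*al^2 + ((-1/2))*C*al^2 + (5/4)*k*b^2 + (1/2)*k^2*C + (1/3)*k^2*A + k^2*c*al + (-1)*k^3*al^2) * u^1 + ((1/4)*b^3 + (1/2)*k*b*C + (1/2)*k*b*A + k*b*c*al + k^2*D*al + (2/3)*k^2*B*al + (-2)*k^2*b*al^2) * u^2 + ((1/8)*b^2*C + (1/6)*b^2*A + (1/4)*b^2*c*al + ((-1/36))*k*B^2 + (1/6)*k*A*C + (1/36)*k*A^2 + (1/3)*k*c*A*al + k*b*D*al + (5/6)*k*b*B*al + ((-3/2))*k*b^2*al^2 + (1/2)*k^2*E*al^2 + ((-1/2))*k^2*A*al^2 + (-1)*k^2*c*al^3) * u^3 + (((-1/36))*b*B^2 + (1/12)*b*A*C + (1/36)*b*A^2 + (1/6)*b*c*A*al + (1/4)*b^2*D*al + (1/6)*b^2*B*al + ((-1/2))*b^3*al^2 + (1/3)*k*B*C*al + (1/3)*k*A*D*al + (5/6)*k*c*B*al^2 + (1/2)*k*b*E*al^2 + ((-5/6))*k*b*A*al^2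 + (-1)*k*b*c*al^3 + ((-2/3))*k^2*D*al^3 + (-1)*k^2*B*al^3) * u^4 + (((-1/72))*A*B^2 + (1/72)*A^2*C + (1/36)*c*A^2*al + (1/12)*b*B*C*al + (1/6)*b*A*D*al + (1/3)*b*c*B*al^2 + (1/8)*b^2*E*al^2 + ((-1/4))*b^2*C*al^2 + ((-1/3))*b^2*A*al^2 + ((-1/2))*b^2*c*al^3 + (1/4)*k*C^2*al^2 + (5/6)*k*B*D*al^2 + ((-1/12))*k*B^2*al^2 + (1/6)*k*A*E*al^2 + ((-1/3))*k*A*C*al^2 + (1/2)*k*c*C*al^3 + ((-1/2))*k*c*A*al^3 + ((-1/4))*k*c^2*al^4 + ((-1/2))*k*b*D*al^3 + ((-3/2))*k*b*B*al^3 + (1/4)*k*b^2*al^4 + ((-1/3))*k^2*E*al^4 + ((-1/2))*k^2*C*al^4) * u^5 + (((-1/36))*B^3*al + (1/36)*A^2*D*al + (1/12)*c*A*B*al^2 + (1/3)*b*B*D*al^2 + ((-1/12))*b*B^2*al^2 + (1/12)*b*A*E*al^2 + ((-1/4))*b*A*C*al^2 + ((-1/3))*b*c*A*al^3 + ((-1/4))*b*c^2*al^4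 + ((-1/3))*b^2*D*al^3 + ((-1/2))*b^2*B*al^3 + (1/4)*b^3*al^4 + (2/3)*k*C*D*al^3 + (4/9)*k*B*E*al^3 + ((-2/3))*k*B*C*al^3 + ((-4/9))*k*A*D*al^3 + ((-1/6))*k*c*D*al^4 + (-1)*k*c*B*al^4 + ((-1/6))*k*b*E*al^4 + ((-1/2))*k*b*C*al^4) * u^6 + (((-1/18))*B^2*C*al^2 + ((-1/24))*A*C^2*al^2 + (1/12)*A*B*D*al^2 + (1/72)*A^2*E*al^2 + (1/12)*c*B^2*al^3 + ((-1/12))*c*A*C*al^3 + ((-1/8))*c^2*A*al^4 + (1/12)*b*C*D*al^3 + (7/36)*b*B*E*al^3 + ((-5/12))*b*B*C*al^3 + ((-5/18))*b*A*D*al^3 + ((-1/3))*b*c*D*al^4 + ((-1/2))*b*c*B*al^4 + ((-1/12))*b^2*E*al^4 + (1/8)*b^2*C*al^4 + (1/4)*b^2*c*al^5 + (1/12)*k*D^2*al^4 + (1/3)*k*C*E*al^4 + ((-1/4))*k*C^2*al^4 + ((-5/6))*k*B*D*al^4 + ((-1/6))*k*A*E*al^4 + ((-1/6))*k*c*E*al^5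 + ((-1/2))*k*c*C*al^5 + (1/6)*k*b*D*al^5) * u^7 + (((-1/12))*B*C^2*al^3 + (1/12)*B^2*D*al^3 + ((-1/18))*A*C*D*al^3 + (1/18)*A*B*E*al^3 + ((-1/12))*c*B*C*al^4 + ((-7/36))*c*A*D*al^4 + ((-1/4))*c^2*B*al^5 + ((-1/12))*b*D^2*al^4 + (1/12)*b*C*E*al^4 + ((-1/3))*b*B*D*al^4 + ((-1/12))*b*A*E*al^4 + ((-1/6))*b*c*E*al^5 + (5/12)*b^2*D*al^5 + ((-1/3))*k*C*D*al^5 + ((-1/3))*k*B*E*al^5) * u^8 + ((5/72)*B^2*E*al^4 + ((-5/72))*A*D^2*al^4 + ((-1/3))*c*B*D*al^5 + ((-1/12))*c*A*E*al^5 + ((-1/8))*c^2*C*al^6 + ((-1/12))*b*D*E*al^5 + (1/4)*b*C*D*al^5 + ((-1/12))*b*B*E*al^5 + (1/6)*b*c*D*al^6 + (1/8)*b^2*E*al^6 + ((-1/36))*k*E^2*al^6 + (1/36)*k*D^2*al^6 + ((-1/6))*k*C*E*al^6) * u^9 + ((1/12)*C^2*D*al^5 + ((-1/12))*B*D^2*al^5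 + (1/18)*B*C*E*al^5 + ((-1/18))*A*D*E*al^5 + ((-1/12))*c*C*D*al^6 + ((-1/6))*c*B*E*al^6 + ((-1/36))*b*E^2*al^6 + (7/36)*b*D^2*al^6 + (1/12)*b*C*E*al^6) * u^10 + ((1/18)*C*D^2*al^6 + (1/24)*C^2*E*al^6 + ((-1/12))*B*D*E*al^6 + ((-1/72))*A*E^2*al^6 + (1/36)*c*D^2*al^7 + ((-1/12))*c*C*E*al^7 + (1/12)*b*D*E*al^7) * u^11 + ((1/36)*D^3*al^7 + ((-1/36))*B*E^2*al^7) * u^12 + ((1/72)*D^2*E*al^8 + ((-1/72))*C*E^2*al^8) * u^13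

set_option maxHeartbeats 2000000 in
def Q2 (k b c A B C D E al u : ℝ) : ℝ :=
  (C*al + (-1)*k^3*al) + ((1/2)*D*al^2 + (1/3)*k^2*B + ((-3/2))*k^2*b*al) * u^1 + ((1/4)*k*b*B + (-1)*k*b^2*al + (1/2)*k^2*C*al + ((-2/3))*k^2*A*al + ((-1/2))*k^2*c*al^2) * u^2 + ((1/24)*b^2*B + ((-1/4))*b^3*al + (1/18)*k*A*B + (1/4)*k*b*C*al + ((-3/4))*k*b*A*al + ((-3/4))*k*b*c*al^2 + ((-3/2))*k^2*B*al^2 + ((-1/2))*k^2*b*al^3) * u^3 + ((1/72)*b*A*B + ((-1/4))*b^2*A*al + ((-1/4))*b^2*c*al^2 + (1/4)*k*B^2*al + ((-1/12))*k*A^2*al + ((-1/3))*k*c*A*al^2 + ((-1/4))*k*b*D*al^2 + ((-13/12))*k*b*B*al^2 + ((-1/6))*k^2*E*al^3 + (-1)*k^2*C*al^3) * u^4 + ((1/12)*b*B^2*al + ((-1/24))*b*A*C*al + ((-1/18))*b*A^2*al + ((-5/24))*b*c*A*al^2 + ((-1/8))*b^2*D*al^2 + ((-1/3))*b^2*B*al^2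 + (7/12)*k*B*C*al^2 + ((-1/6))*k*A*D*al^2 + ((-5/12))*k*A*B*al^2 + ((-3/4))*k*c*B*al^3 + ((-1/4))*k*b*E*al^3 + ((-1/4))*k*b*A*al^3 + ((-1/4))*k*b*c*al^4 + ((-1/6))*k^2*D*al^4) * u^5 + ((1/72)*A*B^2*al + ((-1/72))*A^2*C*al + ((-1/24))*c*A^2*al^2 + (1/8)*b*B*C*al^2 + ((-1/8))*b*A*D*al^2 + ((-5/24))*b*A*B*al^2 + ((-1/2))*b*c*B*al^3 + ((-1/12))*b^2*E*al^3 + ((-1/12))*b^2*A*al^3 + ((-1/4))*b^2*c*al^4 + (1/2)*k*C^2*al^3 + ((-1/9))*k*B*D*al^3 + ((-1/2))*k*B^2*al^3 + ((-1/9))*k*A*E*al^3 + ((-1/3))*k*A*C*al^3 + ((-1/2))*k*c*C*al^4 + (1/4)*k*b*D*al^4 + ((-1/2))*k*b*B*al^4) * u^6 + ((1/24)*B^3*al^2 + ((-1/72))*A*B*C*al^2 + ((-1/36))*A^2*D*al^2 + ((-5/24))*c*A*B*al^3 + (1/8)*b*C^2*al^3 + ((-7/36))*b*B*D*al^3 +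 ((-1/12))*b*B^2*al^3 + ((-5/72))*b*A*E*al^3 + ((-1/8))*b*A*C*al^3 + ((-3/8))*b*c*C*al^4 + ((-1/8))*b*c*A*al^4 + (1/8)*b^2*B*al^4 + (1/4)*b^3*al^5 + (1/4)*k*C*D*al^4 + ((-1/4))*k*B*E*al^4 + ((-3/4))*k*B*C*al^4 + ((-1/12))*k*A*D*al^4 + ((-1/12))*k*c*D*al^5 + ((-1/12))*k*b*E*al^5 + ((-1/4))*k*b*C*al^5) * u^7 + ((1/8)*B^2*C*al^3 + ((-1/9))*A*B*D*al^3 + ((-1/72))*A^2*E*al^3 + ((-1/4))*c*B^2*al^4 + ((-1/6))*c*A*C*al^4 + ((-1/24))*b*C*D*al^4 + ((-1/6))*b*B*E*al^4 + (5/24)*b*B*C*al^4 + ((-5/72))*b*A*D*al^4 + ((-1/12))*b*c*D*al^5 + ((-1/4))*b*c*B*al^5 + ((-1/12))*b^2*E*al^5 + (1/2)*b^2*C*al^5 + (1/12)*k*D^2*al^5 + ((-1/6))*k*C*E*al^5 + ((-1/4))*k*C^2*al^5 + ((-1/6))*k*B*D*al^5) * u^8 + ((5/24)*B*C^2*al^4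 + ((-5/72))*B^2*D*al^4 + ((-5/72))*A*C*D*al^4 + ((-5/72))*A*B*E*al^4 + ((-3/8))*c*B*C*al^5 + ((-1/24))*c*A*D*al^5 + ((-1/8))*b*C*E*al^5 + (3/8)*b*C^2*al^5 + (1/12)*b*B*D*al^5 + ((-1/24))*b*A*E*al^5 + ((-1/8))*b*c*C*al^6 + (7/24)*b^2*D*al^6 + ((-1/36))*k*D*E*al^6 + ((-1/12))*k*C*D*al^6) * u^9 + ((1/8)*C^3*al^5 + (1/36)*B*C*D*al^5 + ((-1/12))*B^2*E*al^5 + ((-1/72))*A*D^2*al^5 + ((-1/18))*A*C*E*al^5 + ((-1/8))*c*C^2*al^6 + ((-1/12))*c*B*D*al^6 + ((-1/36))*b*D*E*al^6 + (3/8)*b*C*D*al^6 + ((-1/12))*b*B*E*al^6) * u^10 + ((1/8)*C^2*D*al^6 + (1/72)*B*D^2*al^6 + ((-1/8))*B*C*E*al^6 + ((-1/72))*A*D*E*al^6 + ((-1/24))*c*C*D*al^7 + (1/9)*b*D^2*al^7 + ((-1/24))*b*C*E*al^7) * u^11 + ((5/72)*C*D^2*al^7 + ((-1/24))*C^2*E*al^7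 + ((-1/36))*B*D*E*al^7) * u^12 + ((1/72)*D^3*al^8 + ((-1/72))*C*D*E*al^8) * u^13

set_option maxHeartbeats 4000000 in
lemma fact1 (k b c A B C D E al u : ℝ) :
    MM k b b c A B C D E u (al*u^2)
      = (C/2 + k^3 - A/2 + c*al)*u^2 + u^3 * Q1 k b c A B C D E al u := by
  unfold MM Q1 Hu Hv Huu Hvv; ring

set_option maxHeartbeats 4000000 in
lemma fact2 (k b c A B C D E al u : ℝ) :
    NN k b b c A B C D E u (al*u^2)
      = (B/2 + b*al)*u^2 + u^3 * Q2 k b c A B C D E al u := by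
  unfold NN Q2 Hu Hv Huu Huv; ring

set_option maxHeartbeats 2000000 in
lemma continuous_Q1 (k b c A B C D E al : ℝ) : Continuous (fun u => Q1 k b c A B C D E al u) := by
  unfold Q1; fun_prop

set_option maxHeartbeats 2000000 in
lemma continuous_Q2 (k b c A B C D E al : ℝ) : Continuous (fun u => Q2 k b c A B C D E al u) := by
  unfold Q2; fun_prop

/-- Implicit function theorem, tailored: `F : ℝ² → ℝ` analytic (`C^⊤ = C^ω`), with
nonvanishing `v`-partial derivative at `x₀`.  Produces a local inverse `g` of
`Φ = (u, F)`. -/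
theorem implicit_pt (F : ℝ × ℝ → ℝ) (hF : ContDiff ℝ (⊤ : ℕ∞) F) (Fv : ℝ × ℝ → ℝ)
    (hFv : ∀ p : ℝ × ℝ, HasDerivAt (fun y => F (p.1, y)) (Fv p) p.2)
    (x₀ : ℝ × ℝ) (hq : Fv x₀ ≠ 0) :
    ∃ g : ℝ × ℝ → ℝ × ℝ, ContDiffAt ℝ (⊤ : ℕ∞) g (x₀.1, F x₀) ∧ g (x₀.1, F x₀) = x₀ ∧
      (∀ᶠ y in 𝓝 (x₀.1, F x₀), ((g y).1, F (g y)) = y) ∧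
      (∀ᶠ x in 𝓝 x₀, g (x.1, F x) = x) ∧
      ∃ t : Set (ℝ × ℝ), IsOpen t ∧ (x₀.1, F x₀) ∈ t ∧ ContinuousOn g t := by
  set Φ : ℝ × ℝ → ℝ × ℝ := fun p => (p.1, F p) with hΦdef
  have hΦ : ContDiff ℝ (⊤ : ℕ∞) Φ := contDiff_fst.prodMk hF
  have hd : DifferentiableAt ℝ Φ x₀ := (hΦ.differentiable (by simp)).differentiableAt
  set L : ℝ × ℝ →L[ℝ] ℝ × ℝ := fderiv ℝ Φ x₀ with hLdef
  have hL : HasFDerivAt Φ L x₀ := hd.hasFDerivAt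
  -- first component of L
  have hfst : ∀ v : ℝ × ℝ, (L v).1 = v.1 := by
    intro v
    have h1 : HasFDerivAt (fun p : ℝ × ℝ => p.1) ((ContinuousLinearMap.fst ℝ ℝ ℝ).comp L) x₀ := by
      have := (ContinuousLinearMap.fst ℝ ℝ ℝ).hasFDerivAt.comp x₀ hL
      exact this
    have h2 : HasFDerivAt (fun p : ℝ × ℝ => p.1) (ContinuousLinearMap.fst ℝ ℝ ℝ) x₀ :=
      (ContinuousLinearMap.fst ℝ ℝ ℝ).hasFDerivAt
    have := h1.unique h2
    calc (L v).1 = ((ContinuousLinearMap.fst ℝ ℝ ℝ).comp L) v := rfl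
    _ = v.1 := by rw [this]; rfl
  -- second basis vector
  have h01 : L (0, 1) = (0, Fv x₀) := by
    have hγ : HasDerivAt (fun t : ℝ => (x₀.1, t)) ((0 : ℝ), (1 : ℝ)) x₀.2 :=
      (hasDerivAt_const _ _).prodMk (hasDerivAt_id _)
    have h1 : HasDerivAt (Φ ∘ fun t : ℝ => (x₀.1, t)) (L (0, 1)) x₀.2 := by
      have := hL.comp_hasDerivAt x₀.2 hγ
      simpa using this
    have h2 : HasDerivAt (Φ ∘ fun t : ℝ => (x₀.1, t)) ((0 : ℝ), Fv x₀) x₀.2 := by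
      have : (Φ ∘ fun t : ℝ => (x₀.1, t)) = fun t => (x₀.1, F (x₀.1, t)) := rfl
      rw [this]
      exact (hasDerivAt_const _ _).prodMk (by simpa using hFv x₀)
    exact h1.unique h2
  set m : ℝ := (L (1, 0)).2 with hmdef
  set q : ℝ := Fv x₀ with hqdef
  have hLv : ∀ v : ℝ × ℝ, L v = (v.1, m * v.1 + q * v.2) := by
    intro v
    have hv : v = v.1 • ((1 : ℝ), (0 : ℝ)) + v.2 • ((0 : ℝ), (1 : ℝ)) := by
      ext <;> simp
    have h10 : L (1, 0) = (1, m) := by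
      have := hfst (1, 0); ext
      · simpa using this
      · rfl
    calc L v = L (v.1 • ((1 : ℝ), (0 : ℝ)) + v.2 • ((0 : ℝ), (1 : ℝ))) := by rw [← hv]
    _ = v.1 • L (1, 0) + v.2 • L (0, 1) := by rw [map_add, map_smul, map_smul]
    _ = (v.1, m * v.1 + q * v.2) := by rw [h10, h01]; ext <;> simp [mul_comm] <;> ring
  -- the inverse linear map
  set Linv : ℝ × ℝ →L[ℝ] ℝ × ℝ :=
    (ContinuousLinearMap.fst ℝ ℝ ℝ).prod
      ((q⁻¹) • ContinuousLinearMap.snd ℝ ℝ ℝ - (m / q) • ContinuousLinearMap.fst ℝ ℝ ℝ)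
    with hLinvdef
  have hLinv : ∀ w : ℝ × ℝ, Linv w = (w.1, q⁻¹ * w.2 - m / q * w.1) := by
    intro w; rfl
  have hleft : Function.LeftInverse Linv L := by
    intro v
    rw [hLv v, hLinv]
    ext
    · rfl
    · show q⁻¹ * (m * v.1 + q * v.2) - m / q * v.1 = v.2
      field_simp
      ring
  have hright : Function.RightInverse Linv L := by
    intro w
    rw [hLinv, hLv]
    ext
    · rfl
    · show m * w.1 + q * (q⁻¹ * w.2 - m / q * w.1) = w.2
      field_simp
      ring
  set e : (ℝ × ℝ) ≃L[ℝ] ℝ × ℝ := ContinuousLinearEquiv.equivOfInverse L Linv hleft hright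
    with hedef
  have hecoe : (e : ℝ × ℝ →L[ℝ] ℝ × ℝ) = L := rfl
  have hL' : HasFDerivAt Φ (e : ℝ × ℝ →L[ℝ] ℝ × ℝ) x₀ := by rw [hecoe]; exact hL
  have hcd : ContDiffAt ℝ (⊤ : ℕ∞) Φ x₀ := hΦ.contDiffAt
  have hs : HasStrictFDerivAt Φ (e : ℝ × ℝ →L[ℝ] ℝ × ℝ) x₀ := hcd.hasStrictFDerivAt' hL' (by simp)
  refine ⟨hs.localInverse Φ e x₀, ?_, ?_, ?_, ?_, ?_⟩
  · have := hcd.to_localInverse (f' := e) hL' (by simp)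
    exact this
  · exact hs.localInverse_apply_image
  · have := hs.eventually_right_inverse
    filter_upwards [this] with y hy
    exact hy
  · exact hs.eventually_left_inverse
  · refine ⟨(hs.toOpenPartialHomeomorph Φ).target, (hs.toOpenPartialHomeomorph Φ).open_target,
      hs.image_mem_toOpenPartialHomeomorph_target, ?_⟩
    rw [hs.localInverse_def]
    exact (hs.toOpenPartialHomeomorph Φ).continuousOn_symm
lemma mvt_abs (f f' : ℝ → ℝ) (hf : ∀ x, HasDerivAt f (f' x) x) (x y : ℝ) :
    ∃ ξ, |ξ| ≤ max |x| |y| ∧ f y - f x = f' ξ * (y - x) := by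
  rcases lt_trichotomy x y with h | h | h
  · obtain ⟨ξ, hξ, hval⟩ := exists_hasDerivAt_eq_slope f f' h
      (fun t _ => (hf t).continuousAt.continuousWithinAt) (fun t _ => hf t)
    refine ⟨ξ, ?_, ?_⟩
    · rw [abs_le]
      constructor
      · calc -(max |x| |y|) ≤ -|x| := neg_le_neg (le_max_left _ _)
          _ ≤ x := neg_abs_le x
          _ ≤ ξ := le_of_lt hξ.1
      · exact le_trans (le_of_lt hξ.2) (le_trans (le_abs_self y) (le_max_right _ _))
    · rw [hval]
      rw [div_mul_cancel₀]
      exact sub_ne_zero.2 (ne_of_gt h)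
  · subst h
    exact ⟨x, le_max_left _ _, by ring⟩
  · obtain ⟨ξ, hξ, hval⟩ := exists_hasDerivAt_eq_slope f f' h
      (fun t _ => (hf t).continuousAt.continuousWithinAt) (fun t _ => hf t)
    refine ⟨ξ, ?_, ?_⟩
    · rw [abs_le]
      constructor
      · calc -(max |x| |y|) ≤ -|y| := neg_le_neg (le_max_right _ _)
          _ ≤ y := neg_abs_le y
          _ ≤ ξ := le_of_lt hξ.1
      · exact le_trans (le_of_lt hξ.2) (le_trans (le_abs_self x) (le_max_left _ _))
    · have hxy : x - y ≠ 0 := sub_ne_zero.2 (ne_of_gt h)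
      field_simp at hval
      linarith [hval]

lemma cube_isLittleO_sq : (fun u : ℝ => u ^ 3) =o[𝓝 (0 : ℝ)] (fun u => u ^ 2) := by
  rw [Asymptotics.isLittleO_iff]
  intro ε hε
  filter_upwards [Metric.ball_mem_nhds (0 : ℝ) hε] with u hu
  rw [Metric.mem_ball, Real.dist_eq, sub_zero] at hu
  have : ‖u ^ 3‖ = |u| * ‖u ^ 2‖ := by
    rw [Real.norm_eq_abs, Real.norm_eq_abs, abs_pow, abs_pow]; ring
  rw [this]
  have h2 : (0:ℝ) ≤ ‖u ^ 2‖ := norm_nonneg _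
  nlinarith [abs_nonneg u]

lemma cube_mul_isLittleO_sq (P : ℝ → ℝ) (hP : Continuous P) :
    (fun u : ℝ => u ^ 3 * P u) =o[𝓝 (0 : ℝ)] (fun u => u ^ 2) := by
  have hO : (fun u : ℝ => u ^ 3 * P u) =O[𝓝 (0 : ℝ)] (fun u => u ^ 3) := by
    rw [Asymptotics.isBigO_iff]
    refine ⟨|P 0| + 1, ?_⟩
    have hev : ∀ᶠ u in 𝓝 (0 : ℝ), |P u - P 0| < 1 := by
      have := hP.continuousAt (x := (0 : ℝ))
      rw [Metric.continuousAt_iff] at this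
      obtain ⟨δ, hδ, hd⟩ := this 1 one_pos
      filter_upwards [Metric.ball_mem_nhds (0 : ℝ) hδ] with u hu
      simpa [Real.dist_eq] using hd (by simpa using hu)
    filter_upwards [hev] with u hu
    have h1 : |P u| ≤ |P 0| + 1 := by
      have := abs_sub_abs_le_abs_sub (P u) (P 0)
      linarith
    calc ‖u ^ 3 * P u‖ = ‖u ^ 3‖ * |P u| := by
          simp [Real.norm_eq_abs, abs_mul]
      _ ≤ ‖u ^ 3‖ * (|P 0| + 1) := by
          exact mul_le_mul_of_nonneg_left h1 (norm_nonneg _)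
      _ = (|P 0| + 1) * ‖u ^ 3‖ := by ring
  exact hO.trans_isLittleO cube_isLittleO_sq

lemma eventually_abs_le_one (P : ℝ → ℝ) (hP : Continuous P) :
    ∀ᶠ u in 𝓝 (0 : ℝ), |P u| ≤ |P 0| + 1 := by
  have := hP.continuousAt (x := (0 : ℝ))
  rw [Metric.continuousAt_iff] at this
  obtain ⟨δ, hδ, hd⟩ := this 1 one_pos
  filter_upwards [Metric.ball_mem_nhds (0 : ℝ) hδ] with u hu
  have h1 : |P u - P 0| < 1 := by
    simpa [Real.dist_eq] using hd (by simpa using hu)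
  have := abs_sub_abs_le_abs_sub (P u) (P 0)
  linarith

lemma cont2_bound (P : ℝ × ℝ → ℝ) (hP : Continuous P) (r : ℝ) (hr : 0 < r) :
    ∃ δ > 0, ∀ p : ℝ × ℝ, dist p ((0 : ℝ), (0 : ℝ)) < δ → |P p - P ((0:ℝ), (0:ℝ))| < r := by
  have := hP.continuousAt (x := ((0 : ℝ), (0 : ℝ)))
  rw [Metric.continuousAt_iff] at this
  obtain ⟨δ, hδ, hd⟩ := this r hr
  exact ⟨δ, hδ, fun p hp => by simpa [Real.dist_eq] using hd hp⟩

/-- For the `D¹₂,₃` pattern (`a = b ≠ 0`, `c ≠ 0`), with `χ = cB + b(A − C − 2k³)`: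
the curve `M = 0` is locally a smooth graph `v = w(u)` through the origin, and along it
`N(u, w(u)) = (χ/2c) u² + o(u²)`.  In particular, if `χ ≠ 0` the curves `M = 0` and
`N = 0` have exactly quadratic contact at the origin. -/
theorem stmt_11 (k a b c A B C D E : ℝ) (ha : a = b) (hb : b ≠ 0) (hc : c ≠ 0) :
    ∃ ε > 0, ∃ w : ℝ → ℝ,
      ContDiffOn ℝ (⊤ : ℕ∞) w (Set.Ioo (-ε) ε) ∧ w 0 = 0 ∧
      (∀ u : ℝ, |u| < ε → eqM k a b c A B C D E u (w u) = 0) ∧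
      ((fun u : ℝ => eqN k a b c A B C D E u (w u) -
          (c * B + b * (A - C - 2 * k ^ 3)) / (2 * c) * u ^ 2)
        =o[𝓝 (0 : ℝ)] fun u : ℝ => u ^ 2) ∧
      (c * B + b * (A - C - 2 * k ^ 3) ≠ 0 →
        ¬ ((fun u : ℝ => eqN k a b c A B C D E u (w u)) =o[𝓝 (0 : ℝ)] fun u : ℝ => u ^ 2)) := by
  subst ha
  -- abbreviations
  set F : ℝ × ℝ → ℝ := fun p => MM k a a c A B C D E p.1 p.2 with hFdef
  set Fv : ℝ × ℝ → ℝ := fun p => MMv k a a c A B C D E p.1 p.2 with hFvdef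
  have hFv : ∀ p : ℝ × ℝ, HasDerivAt (fun y => F (p.1, y)) (Fv p) p.2 :=
    fun p => hasDerivAt_MM_v k a a c A B C D E p.1 p.2
  have hFcd : ContDiff ℝ (⊤ : ℕ∞) F := contDiff_MM k a a c A B C D E
  -- implicit function at the origin
  obtain ⟨g, hg_cd, hg00, hright, _hleft, t, ht_open, ht_mem, ht_cont⟩ :=
    implicit_pt F hFcd Fv hFv ((0 : ℝ), (0 : ℝ))
      (by show MMv k a a c A B C D E 0 0 ≠ 0; rw [MMv_zero]; exact hc)
  have hF00 : F ((0 : ℝ), (0 : ℝ)) = 0 := MM_zero k a a c A B C D E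
  rw [hF00] at hg_cd hg00 hright ht_mem
  set w : ℝ → ℝ := fun u => (g (u, 0)).2 with hwdef
  have hw0 : w 0 = 0 := by rw [hwdef]; simp only [hg00]
  have hι : Tendsto (fun u : ℝ => (u, (0 : ℝ))) (𝓝 0) (𝓝 ((0 : ℝ), (0 : ℝ))) :=
    (continuous_id.prodMk continuous_const).tendsto' 0 ((0 : ℝ), (0 : ℝ)) rfl
  -- continuity of w at 0
  have hg_c0 : ContinuousAt g ((0 : ℝ), (0 : ℝ)) := ht_cont.continuousAt (ht_open.mem_nhds ht_mem)
  have hwc0 : ContinuousAt w 0 := by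
    have h1 : ContinuousAt (fun u : ℝ => g (u, 0)) 0 := by
      exact ContinuousAt.comp (x := (0:ℝ)) (f := fun u : ℝ => (u, (0:ℝ))) hg_c0
        (continuous_id.prodMk continuous_const).continuousAt
    exact h1.snd
  have hw_t : Tendsto w (𝓝 0) (𝓝 0) := by
    have := hwc0.tendsto; rwa [hw0] at this
  -- main eventual package
  have hP : ∀ᶠ u in 𝓝 (0 : ℝ),
      MM k a a c A B C D E u (w u) = 0 ∧ (u, (0 : ℝ)) ∈ t ∧
      MMv k a a c A B C D E u (w u) ≠ 0 := by
    have hEv1 := hι.eventually hright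
    have hEv2 := hι.eventually (ht_open.eventually_mem ht_mem)
    have hEv3 : ∀ᶠ u in 𝓝 (0 : ℝ), MMv k a a c A B C D E u (w u) ≠ 0 := by
      have hcont : ContinuousAt (fun u => MMv k a a c A B C D E u (w u)) 0 := by
        have h2 : ContinuousAt (fun u : ℝ => ((u, w u) : ℝ × ℝ)) 0 :=
          continuousAt_id.prodMk hwc0
        have h3 : ContinuousAt ((fun p : ℝ × ℝ => MMv k a a c A B C D E p.1 p.2)
            ∘ (fun u : ℝ => ((u, w u) : ℝ × ℝ))) 0 :=
          ContinuousAt.comp ((continuous_MMv k a a c A B C D E).continuousAt) h2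
        exact h3
      have hval : MMv k a a c A B C D E 0 (w 0) ≠ 0 := by
        rw [hw0, MMv_zero]; exact hc
      exact hcont.eventually_ne hval
    filter_upwards [hEv1, hEv2, hEv3] with u h1 h2 h3
    have hfst : (g (u, 0)).1 = u := congrArg Prod.fst h1
    have hsnd : F (g (u, 0)) = 0 := congrArg Prod.snd h1
    refine ⟨?_, h2, h3⟩
    have : F (g (u, 0)) = MM k a a c A B C D E (g (u, 0)).1 (g (u, 0)).2 := rfl
    rw [this, hfst] at hsnd
    exact hsnd
  obtain ⟨ε, hε, hball⟩ := Metric.eventually_nhds_iff.1 hP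
  have hball' : ∀ u : ℝ, |u| < ε →
      MM k a a c A B C D E u (w u) = 0 ∧ (u, (0 : ℝ)) ∈ t ∧
      MMv k a a c A B C D E u (w u) ≠ 0 := by
    intro u hu
    exact hball (by simpa [Real.dist_eq] using hu)
  -- Taylor expansion part (computed before choosing the final data)
  set α : ℝ := (A - C - 2*k^3) / (2*c) with hαdef
  have h0 : C/2 + k^3 - A/2 + c*α = 0 := by
    rw [hαdef]; field_simp; ring
  have hMα : ∀ u : ℝ, MM k a a c A B C D E u (α*u^2) = u^3 * Q1 k a c A B C D E α u := by
    intro u; rw [fact1, h0]; ring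
  have hNα : ∀ u : ℝ, NN k a a c A B C D E u (α*u^2)
      = (B/2 + a*α)*u^2 + u^3 * Q2 k a c A B C D E α u := fun u => fact2 k a c A B C D E α u
  have hcpos : (0:ℝ) < |c| := abs_pos.2 hc
  have hsm : ∀ δ' : ℝ, 0 < δ' → ∀ᶠ u in 𝓝 (0:ℝ), |u| < δ' ∧ |w u| < δ' ∧ |α*u^2| < δ' := by
    intro δ' hδ'
    have h1 : ∀ᶠ u in 𝓝 (0:ℝ), |u| < δ' := by
      filter_upwards [Metric.ball_mem_nhds (0:ℝ) hδ'] with u hu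
      simpa [Real.dist_eq] using hu
    have h2 : ∀ᶠ u in 𝓝 (0:ℝ), |w u| < δ' := by
      filter_upwards [hw_t (Metric.ball_mem_nhds (0:ℝ) hδ')] with u hu
      rw [Set.mem_preimage, Metric.mem_ball, Real.dist_eq, sub_zero] at hu
      exact hu
    have h3 : ∀ᶠ u in 𝓝 (0:ℝ), |α*u^2| < δ' := by
      have hco : Tendsto (fun u : ℝ => α*u^2) (𝓝 0) (𝓝 0) := by
        have hcont : Continuous fun u : ℝ => α*u^2 := by fun_prop
        exact hcont.tendsto' 0 0 (by norm_num)
      filter_upwards [hco (Metric.ball_mem_nhds (0:ℝ) hδ')] with u hu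
      rw [Set.mem_preimage, Metric.mem_ball, Real.dist_eq, sub_zero] at hu
      exact hu
    filter_upwards [h1, h2, h3] with u e1 e2 e3
    exact ⟨e1, e2, e3⟩
  -- lower bound on the v-derivative of M near the origin
  obtain ⟨δ, hδpos, hδ⟩ := cont2_bound (fun p : ℝ × ℝ => MMv k a a c A B C D E p.1 p.2)
    (continuous_MMv k a a c A B C D E) (|c|/2) (by positivity)
  have hδ' : ∀ p : ℝ × ℝ, dist p ((0:ℝ),(0:ℝ)) < δ → |c|/2 ≤ |MMv k a a c A B C D E p.1 p.2| := by
    intro p hp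
    have h1 := hδ p hp
    rw [MMv_zero] at h1
    have h2 := abs_sub_abs_le_abs_sub c (MMv k a a c A B C D E p.1 p.2)
    rw [abs_sub_comm] at h2
    linarith
  have hdd : ∀ᶠ u in 𝓝 (0:ℝ),
      |w u - α*u^2| ≤ 2/|c| * |u^3 * Q1 k a c A B C D E α u| := by
    filter_upwards [hsm δ hδpos, hP] with u hu hPu
    obtain ⟨h1, h2, h3⟩ := hu
    obtain ⟨ξ, hξ, heq⟩ := mvt_abs (fun y => MM k a a c A B C D E u y)
      (fun y => MMv k a a c A B C D E u y)
      (fun y => hasDerivAt_MM_v k a a c A B C D E u y) (α*u^2) (w u)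
    rw [hPu.1, hMα u] at heq
    have hξδ : |ξ| < δ := lt_of_le_of_lt hξ (max_lt h3 h2)
    have hMvb : |c|/2 ≤ |MMv k a a c A B C D E u ξ| := by
      apply hδ' (u, ξ)
      rw [Prod.dist_eq]
      simp only [Real.dist_eq, sub_zero]
      exact max_lt h1 hξδ
    have heq' : |u^3 * Q1 k a c A B C D E α u|
        = |MMv k a a c A B C D E u ξ| * |w u - α*u^2| := by
      rw [← abs_mul, ← heq, abs_sub_comm]
      ring_nf
    have h5 : |c|/2 * |w u - α*u^2| ≤ |u^3 * Q1 k a c A B C D E α u| := by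
      rw [heq']
      exact mul_le_mul_of_nonneg_right hMvb (abs_nonneg _)
    have h8 : 2/|c| * (|c|/2) = 1 := by field_simp
    calc |w u - α*u^2| = 2/|c| * (|c|/2 * |w u - α*u^2|) := by
          rw [← mul_assoc, h8, one_mul]
      _ ≤ 2/|c| * |u^3 * Q1 k a c A B C D E α u| := by
          exact mul_le_mul_of_nonneg_left h5 (by positivity)
  have hddO : (fun u : ℝ => w u - α*u^2) =O[𝓝 (0:ℝ)] fun u : ℝ => u^3 := by
    rw [Asymptotics.isBigO_iff]
    refine ⟨2/|c| * (|Q1 k a c A B C D E α 0| + 1), ?_⟩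
    filter_upwards [hdd, eventually_abs_le_one _ (continuous_Q1 k a c A B C D E α)] with u e1 e2
    have h6 : (0:ℝ) ≤ 2/|c| := by positivity
    calc ‖w u - α*u^2‖ = |w u - α*u^2| := rfl
      _ ≤ 2/|c| * |u^3 * Q1 k a c A B C D E α u| := e1
      _ = 2/|c| * (|Q1 k a c A B C D E α u| * |u^3|) := by rw [abs_mul]; ring
      _ ≤ 2/|c| * ((|Q1 k a c A B C D E α 0| + 1) * |u^3|) := by
          apply mul_le_mul_of_nonneg_left _ h6
          exact mul_le_mul_of_nonneg_right e2 (abs_nonneg _)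
      _ = 2/|c| * (|Q1 k a c A B C D E α 0| + 1) * ‖u^3‖ := by
          rw [Real.norm_eq_abs]; ring
  have hddo : (fun u : ℝ => w u - α*u^2) =o[𝓝 (0:ℝ)] fun u : ℝ => u^2 :=
    hddO.trans_isLittleO cube_isLittleO_sq
  -- the difference of N along the curve and along the parabola
  obtain ⟨δ₂, hδ₂pos, hδ₂⟩ := cont2_bound (fun p : ℝ × ℝ => NNv k a a c A B C D E p.1 p.2)
    (continuous_NNv k a a c A B C D E) 1 one_pos
  have hNd : ∀ᶠ u in 𝓝 (0:ℝ),
      |NN k a a c A B C D E u (w u) - NN k a a c A B C D E u (α*u^2)|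
        ≤ (|NNv k a a c A B C D E 0 0| + 1) * |w u - α*u^2| := by
    filter_upwards [hsm δ₂ hδ₂pos] with u hu
    obtain ⟨h1, h2, h3⟩ := hu
    obtain ⟨ξ, hξ, heq⟩ := mvt_abs (fun y => NN k a a c A B C D E u y)
      (fun y => NNv k a a c A B C D E u y)
      (fun y => hasDerivAt_NN_v k a a c A B C D E u y) (α*u^2) (w u)
    have hξδ : |ξ| < δ₂ := lt_of_le_of_lt hξ (max_lt h3 h2)
    have hb2 : |NNv k a a c A B C D E u ξ| ≤ |NNv k a a c A B C D E 0 0| + 1 := by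
      have h4 : |NNv k a a c A B C D E u ξ - NNv k a a c A B C D E 0 0| < 1 := by
        apply hδ₂ (u, ξ)
        rw [Prod.dist_eq]
        simp only [Real.dist_eq, sub_zero]
        exact max_lt h1 hξδ
      have h5 := abs_sub_abs_le_abs_sub (NNv k a a c A B C D E u ξ) (NNv k a a c A B C D E 0 0)
      linarith
    rw [heq, abs_mul]
    exact mul_le_mul_of_nonneg_right hb2 (abs_nonneg _)
  have hNdo : (fun u : ℝ => NN k a a c A B C D E u (w u) - NN k a a c A B C D E u (α*u^2))
      =o[𝓝 (0:ℝ)] fun u : ℝ => u^2 := by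
    refine Asymptotics.IsBigO.trans_isLittleO ?_ hddo
    rw [Asymptotics.isBigO_iff]
    exact ⟨|NNv k a a c A B C D E 0 0| + 1, by filter_upwards [hNd] with u e; exact e⟩
  have hN2 : (fun u : ℝ => NN k a a c A B C D E u (α*u^2) - (B/2 + a*α)*u^2)
      =o[𝓝 (0:ℝ)] fun u : ℝ => u^2 := by
    have hfe : (fun u : ℝ => NN k a a c A B C D E u (α*u^2) - (B/2 + a*α)*u^2)
        = fun u : ℝ => u^3 * Q2 k a c A B C D E α u := by
      funext u; rw [hNα]; ring
    rw [hfe]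
    exact cube_mul_isLittleO_sq _ (continuous_Q2 k a c A B C D E α)
  have hcoef : (c*B + a*(A - C - 2*k^3))/(2*c) = B/2 + a*α := by
    rw [hαdef]; field_simp
  have hNtaylor : (fun u : ℝ => eqN k a a c A B C D E u (w u) -
      (c * B + a * (A - C - 2 * k ^ 3)) / (2 * c) * u ^ 2) =o[𝓝 (0:ℝ)] fun u : ℝ => u ^ 2 := by
    have hfe : (fun u : ℝ => eqN k a a c A B C D E u (w u) -
        (c * B + a * (A - C - 2 * k ^ 3)) / (2 * c) * u ^ 2)
        = fun u : ℝ => (NN k a a c A B C D E u (w u) - NN k a a c A B C D E u (α*u^2))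
          + (NN k a a c A B C D E u (α*u^2) - (B/2 + a*α)*u^2) := by
      funext u; rw [eqN_eq, hcoef]; ring
    rw [hfe]
    exact hNdo.add hN2
  refine ⟨ε, hε, w, ?_, hw0, ?_, hNtaylor, ?_⟩
  · -- smoothness
    intro u₀ hu₀
    have hu₀' : |u₀| < ε := abs_lt.2 ⟨by linarith [hu₀.1], hu₀.2⟩
    obtain ⟨hM₀, htm₀, hMv₀⟩ := hball' u₀ hu₀'
    have hg_cu : ContinuousAt g (u₀, 0) := ht_cont.continuousAt (ht_open.mem_nhds htm₀)
    have hwc : ContinuousAt w u₀ := by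
      have h1 : ContinuousAt (fun u : ℝ => g (u, 0)) u₀ :=
        ContinuousAt.comp (x := u₀) (f := fun u : ℝ => (u, (0:ℝ))) hg_cu
          (continuous_id.prodMk continuous_const).continuousAt
      exact h1.snd
    obtain ⟨g₁, hg1_cd, _hg1pt, _hr₁, hleft₁, _⟩ :=
      implicit_pt F hFcd Fv hFv (u₀, w u₀) hMv₀
    have hzero : F (u₀, w u₀) = 0 := hM₀
    rw [hzero] at hg1_cd
    have hg1_cd' : ContDiffAt ℝ (⊤ : ℕ∞) g₁ ((u₀, (0:ℝ)) : ℝ × ℝ) := hg1_cd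
    have hx_t : Tendsto (fun u : ℝ => ((u, w u) : ℝ × ℝ)) (𝓝 u₀) (𝓝 (u₀, w u₀)) :=
      (continuousAt_id.prodMk hwc).tendsto
    have hev : ∀ᶠ u in 𝓝 u₀, g₁ (((u, w u) : ℝ × ℝ).1, F (u, w u)) = (u, w u) :=
      hx_t.eventually hleft₁
    have hMnear : ∀ᶠ u in 𝓝 u₀, MM k a a c A B C D E u (w u) = 0 := by
      filter_upwards [(isOpen_Ioo (a := -ε) (b := ε)).eventually_mem hu₀] with u hu
      exact (hball' u (abs_lt.2 ⟨by linarith [hu.1], hu.2⟩)).1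
    have heq : w =ᶠ[𝓝 u₀] (fun u : ℝ => (g₁ (u, 0)).2) := by
      filter_upwards [hev, hMnear] with u h1 h2
      rw [show F (u, w u) = 0 from h2] at h1
      exact (congrArg Prod.snd h1).symm
    have hcda : ContDiffAt ℝ (⊤ : ℕ∞) (fun u : ℝ => (g₁ (u, 0)).2) u₀ := by
      have hι_cd : ContDiffAt ℝ (⊤ : ℕ∞) (fun u : ℝ => ((u, (0:ℝ)) : ℝ × ℝ)) u₀ :=
        (contDiff_id.prodMk contDiff_const).contDiffAt
      have hcomp : ContDiffAt ℝ (⊤ : ℕ∞) (g₁ ∘ fun u : ℝ => ((u, (0:ℝ)) : ℝ × ℝ)) u₀ :=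
        ContDiffAt.comp u₀ hg1_cd' hι_cd
      exact (contDiff_snd.contDiffAt).comp u₀ hcomp
    exact (hcda.congr_of_eventuallyEq heq).contDiffWithinAt
  · -- M = 0 along the curve
    intro u hu
    rw [eqM_eq]
    exact (hball' u hu).1
  · -- non-degeneracy
    intro hχ hcon
    set q : ℝ := (c*B + a*(A - C - 2*k^3))/(2*c) with hqdef
    have hq : q ≠ 0 := div_ne_zero hχ (mul_ne_zero two_ne_zero hc)
    have h2 : (fun u : ℝ => q*u^2) =o[𝓝 (0:ℝ)] fun u : ℝ => u^2 := by
      have h3 := hcon.sub hNtaylor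
      have hfe : (fun u : ℝ => q*u^2) = fun u : ℝ => (eqN k a a c A B C D E u (w u))
          - (eqN k a a c A B C D E u (w u) - (c*B + a*(A - C - 2*k^3))/(2*c)*u^2) := by
        funext u; rw [← hqdef]; ring
      rw [hfe]
      exact h3
    rw [Asymptotics.isLittleO_iff] at h2
    have h4 := h2 (c := |q|/2) (by positivity)
    have h5 := h4.filter_mono (nhdsWithin_le_nhds (s := {(0:ℝ)}ᶜ))
    obtain ⟨u, hu1, hu2⟩ := (h5.and self_mem_nhdsWithin).exists
    have hu0 : u ≠ 0 := hu2
    have hu3 : (0:ℝ) < u^2 := by positivity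
    have hn1 : ‖q*u^2‖ = |q| * u^2 := by
      rw [norm_mul, Real.norm_eq_abs, Real.norm_eq_abs, abs_pow, sq_abs]
    have hn2 : ‖u^2‖ = u^2 := by
      rw [Real.norm_eq_abs, abs_pow, sq_abs]
    rw [hn1, hn2] at hu1
    have hqpos : (0:ℝ) < |q| := abs_pos.2 hq
    nlinarith
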